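/- arXiv:1012.5257 — 4 statements merged into one kernel-verified Lean document; each statement's English description precedes it below -/
import Mathlib

section
/- Let k be a field, V a k-vector space, f : V → V a nilpotent k-linear endomorphism, and W ⊆ V a k-subspace. Then the image of W under id + f equals W if and only if f maps W into W, i.e. (1 + f)(W) = W ⟺ f(W) ⊆ W. -/
/-- If `f` is a nilpotent endomorphism of a vector space `V` over a field `k`
and `W ⊆ V` is a subspace, then `(1 + f)(W) = W` if and only if `f(W) ⊆ W`. -/
theorem map_one_add_nilpotent_eq_iff {k V : Type*} [Field k] [AddCommGroup V] [Module k V]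
    (f : V →ₗ[k] V) (hf : IsNilpotent f) (W : Submodule k V) :
    Submodule.map ((1 : V →ₗ[k] V) + f) W = W ↔ ∀ w ∈ W, f w ∈ W := by
  obtain ⟨n, hn⟩ := hf
  constructor
  · intro h w hw
    have hw' : ((1 : V →ₗ[k] V) + f) w ∈ W := by
      rw [← h]; exact Submodule.mem_map_of_mem hw
    simpa using W.sub_mem hw' hw
  · intro h
    apply le_antisymm
    · rintro x ⟨w, hw, rfl⟩
      simp only [LinearMap.add_apply, Module.End.one_apply]
      exact W.add_mem hw (h w hw)
    · intro w hw
      have hpow : ∀ i, (f ^ i) w ∈ W := by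
        intro i
        induction i with
        | zero => simpa using hw
        | succ i ih => rw [pow_succ']; exact h _ ih
      refine ⟨∑ i ∈ Finset.range n, (-1 : k) ^ i • (f ^ i) w, ?_, ?_⟩
      · exact Submodule.sum_mem _ fun i _ => W.smul_mem _ (hpow i)
      · simp only [LinearMap.add_apply, Module.End.one_apply, map_sum, map_smul]
        have key : ∀ i, f ((f ^ i) w) = (f ^ (i + 1)) w := by
          intro i; rw [pow_succ', Module.End.mul_apply]
        simp_rw [key, smul_add]
        have : ∀ i ∈ Finset.range n,
            (-1 : k) ^ i • (f ^ i) w + (-1 : k) ^ i • (f ^ (i + 1)) w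
            = (-1 : k) ^ i • (f ^ i) w - (-1 : k) ^ (i + 1) • (f ^ (i + 1)) w := by
          intro i _
          rw [pow_succ (-1 : k), mul_neg_one, neg_smul, sub_neg_eq_add]
        rw [Finset.sum_congr rfl this, Finset.sum_range_sub' (fun i => (-1 : k) ^ i • (f ^ i) w)]
        simp [hn]
end

section
/- Let k be a field, n ≥ 1 an integer, R = k[X]/(X^n), and x the image of X in R. Let V be a finite free R-module and W ⊆ V an R-submodule with dim_k W = n·s for some natural number s. Then W is a free R-module if and only if the kernel of the multiplication-by-x map restricted to W has k-dimension exactly s (equivalently, multiplication by x on W has the maximal possible rank (n−1)·s). -/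
set_option synthInstance.maxHeartbeats 400000

open Polynomial

/-- The ring of truncated polynomials `R = k[X]/(X^n)`. -/
abbrev TruncPoly (k : Type*) [Field k] (n : ℕ) : Type _ :=
  k[X] ⧸ Ideal.span {(X : k[X]) ^ n}

/-- The image `x` of `X` in `R = k[X]/(X^n)`. -/
noncomputable abbrev truncX (k : Type*) [Field k] (n : ℕ) : TruncPoly k n :=
  Ideal.Quotient.mk _ (X : k[X])

/-!
Multiplication by `x` is a `k`-linear endomorphism `f` of `W` with `f ^ n = 0`, so subadditivity
of nullity under composition gives `dim W ≤ n · dim ker f`; moreover `dim ker f = dim (W / xW)`.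
If `W ≅ Rʳ`, then `W / xW` is spanned by the images of a basis, so `dim ker f ≤ r = s`.
Conversely, if `dim ker f = s`, lifts of a basis of `W / xW` generate `W` (Nakayama's lemma for
the nilpotent `f`), giving a surjection `Rˢ → W` between `k`-spaces of the same dimension `n · s`,
hence an isomorphism.
-/

open Module Submodule

namespace LinearMap

variable {K M N P : Type*} [Field K] [AddCommGroup M] [Module K M] [AddCommGroup N] [Module K N]
  [AddCommGroup P] [Module K P]

theorem finrank_ker_comp_le [FiniteDimensional K M] [FiniteDimensional K N] (g : N →ₗ[K] P)
    (h : M →ₗ[K] N) :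
    finrank K (ker (g ∘ₗ h)) ≤ finrank K (ker g) + finrank K (ker h) := by
  set h' := h.domRestrict (ker (g ∘ₗ h))
  have hrange : finrank K (range h') ≤ finrank K (ker g) := by
    refine Submodule.finrank_mono ?_
    rintro _ ⟨w, rfl⟩
    exact w.2
  have hker : finrank K (ker h') ≤ finrank K (ker h) := by
    rw [ker_domRestrict, ← Submodule.finrank_map_subtype_eq, Submodule.map_comap_subtype]
    exact Submodule.finrank_mono inf_le_right
  have := finrank_range_add_finrank_ker h'
  omega

theorem finrank_le_mul_finrank_ker_of_pow_eq_zero [FiniteDimensional K M] (f : Module.End K M)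
    {m : ℕ} (hf : f ^ m = 0) : finrank K M ≤ m * finrank K (ker f) := by
  have hpow : ∀ i : ℕ, finrank K (ker (f ^ i)) ≤ i * finrank K (ker f) := by
    intro i
    induction i with
    | zero => simp [Module.End.one_eq_id]
    | succ i ih =>
      rw [pow_succ, Module.End.mul_eq_comp, add_one_mul]
      exact (finrank_ker_comp_le _ _).trans (by omega)
  have := hpow m
  rwa [hf, ker_zero, finrank_top] at this

theorem finrank_ker_eq_finrank_quotient_range [FiniteDimensional K M] (f : Module.End K M) :
    finrank K (ker f) = finrank K (M ⧸ range f) := by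
  have := finrank_range_add_finrank_ker f
  have := (range f).finrank_quotient_add_finrank
  omega

end LinearMap

theorem Submodule.eq_top_of_sup_range_eq_top_of_pow_eq_zero {R M : Type*} [Semiring R]
    [AddCommMonoid M] [Module R M] {f : Module.End R M} {m : ℕ} (hf : f ^ m = 0)
    {p : Submodule R M} (hp : p.map f ≤ p) (h : p ⊔ LinearMap.range f = ⊤) : p = ⊤ := by
  have hpow : ∀ i : ℕ, p ⊔ LinearMap.range (f ^ i) = ⊤ := by
    intro i
    induction i with
    | zero => simp [Module.End.one_eq_id]
    | succ i ih =>
      have hrange : LinearMap.range f ≤ p ⊔ LinearMap.range (f ^ (i + 1)) := by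
        rw [← Submodule.map_top, ← ih, Submodule.map_sup, pow_succ', Module.End.mul_eq_comp,
          LinearMap.range_comp]
        exact sup_le_sup_right hp _
      exact top_le_iff.mp (h ▸ sup_le le_sup_left hrange)
  simpa [hf] using hpow m

theorem Module.Free.of_surjective_of_finrank_eq {K A F M : Type*} [Field K] [Ring A]
    [Algebra K A] [AddCommGroup F] [Module A F] [Module K F] [IsScalarTower K A F]
    [AddCommGroup M] [Module A M] [Module K M] [IsScalarTower K A M] [Module.Free A F]
    [FiniteDimensional K F] [FiniteDimensional K M] (φ : F →ₗ[A] M)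
    (hφ : Function.Surjective φ) (h : finrank K F = finrank K M) : Module.Free A M :=
  have hinj := (LinearMap.injective_iff_surjective_of_finrank_eq_finrank h
    (f := φ.restrictScalars K)).mpr hφ
  Module.Free.of_equiv (LinearEquiv.ofBijective φ ⟨hinj, hφ⟩)

theorem truncX_pow_eq_zero {k : Type*} [Field k] {n : ℕ} : truncX k n ^ n = 0 := by
  rw [← map_pow, Ideal.Quotient.eq_zero_iff_mem]
  exact Ideal.subset_span rfl

namespace TruncPoly

variable {k : Type*} [Field k] {n : ℕ}

theorem finrank_eq : finrank k (TruncPoly k n) = n := by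
  show finrank k (AdjoinRoot ((X : k[X]) ^ n)) = n
  rw [(AdjoinRoot.powerBasis (pow_ne_zero n X_ne_zero)).finrank]
  simp [AdjoinRoot.powerBasis]

instance : FiniteDimensional k (TruncPoly k n) :=
  .of_basis (AdjoinRoot.powerBasis (pow_ne_zero n (X_ne_zero (R := k)))).basis

theorem nontrivial (hn : n ≠ 0) : Nontrivial (TruncPoly k n) :=
  Ideal.Quotient.nontrivial_iff.mpr (by
    rw [Ne, Ideal.span_singleton_eq_top, isUnit_pow_iff hn]
    exact not_isUnit_X)

theorem exists_eq_algebraMap_add_truncX_mul (r : TruncPoly k n) :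
    ∃ c q, r = algebraMap k _ c + truncX k n * q := by
  obtain ⟨p, rfl⟩ := Ideal.Quotient.mk_surjective r
  refine ⟨p.coeff 0, Ideal.Quotient.mk _ p.divX, ?_⟩
  conv_lhs => rw [← X_mul_divX_add p]
  rw [map_add, map_mul, add_comm, IsScalarTower.algebraMap_apply k k[X] (TruncPoly k n),
    Ideal.Quotient.algebraMap_eq, algebraMap_eq]

variable (M : Type*) [AddCommGroup M] [Module (TruncPoly k n) M] [Module k M]
  [IsScalarTower k (TruncPoly k n) M]

theorem finrank_eq_mul_finrank (hn : n ≠ 0) [Module.Free (TruncPoly k n) M] :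
    finrank k M = n * finrank (TruncPoly k n) M := by
  have := nontrivial (k := k) hn
  rw [← finrank_mul_finrank k (TruncPoly k n) M, finrank_eq]

end TruncPoly

section mulX

variable (k : Type*) [Field k] (n : ℕ) (M : Type*) [AddCommGroup M] [Module (TruncPoly k n) M]
  [Module k M] [IsScalarTower k (TruncPoly k n) M]

noncomputable def mulX : Module.End k M :=
  (LinearMap.lsmul (TruncPoly k n) M (truncX k n)).restrictScalars k

theorem mulX_pow_eq_zero : mulX k n M ^ n = 0 := by
  change Module.toModuleEnd k (S := TruncPoly k n) M (truncX k n) ^ n = 0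
  rw [← map_pow, truncX_pow_eq_zero, map_zero]

variable {k n M}

theorem span_eq_top_of_span_sup_range_mulX_eq_top {S : Set M}
    (h : span k S ⊔ LinearMap.range (mulX k n M) = ⊤) : span (TruncPoly k n) S = ⊤ := by
  refine (restrictScalars_eq_top_iff k _ _).mp
    (eq_top_of_sup_range_eq_top_of_pow_eq_zero (mulX_pow_eq_zero k n M) ?_ ?_)
  · rintro _ ⟨w, hw, rfl⟩
    exact smul_mem _ (truncX k n) hw
  · exact top_le_iff.mp (h ▸ sup_le_sup_right (span_le_restrictScalars k _ S) _)

theorem finrank_quotient_range_mulX_le {ι : Type*} [Fintype ι] (b : Basis ι (TruncPoly k n) M) :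
    finrank k (M ⧸ LinearMap.range (mulX k n M)) ≤ Fintype.card ι := by
  set Q := LinearMap.range (mulX k n M)
  have hspan : span k (Set.range fun i ↦ Q.mkQ (b i)) = ⊤ := by
    refine eq_top_iff.mpr fun q _ ↦ ?_
    obtain ⟨w, rfl⟩ := Q.mkQ_surjective q
    rw [← b.sum_repr w, map_sum]
    refine sum_mem fun i _ ↦ ?_
    obtain ⟨c, r, hc⟩ := TruncPoly.exists_eq_algebraMap_add_truncX_mul (b.repr w i)
    have hx : Q.mkQ ((truncX k n * r) • b i) = 0 := by
      rw [mkQ_apply, Quotient.mk_eq_zero, mul_smul]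
      exact LinearMap.mem_range_self _ _
    rw [hc, add_smul, map_add, hx, add_zero, algebraMap_smul, map_smul]
    exact smul_mem _ _ (subset_span ⟨i, rfl⟩)
  rw [← finrank_top, ← hspan]
  exact finrank_range_le_card _

theorem finrank_ker_mulX_of_free (hn : n ≠ 0) [Module.Free (TruncPoly k n) M]
    [Module.Finite (TruncPoly k n) M] :
    finrank k (LinearMap.ker (mulX k n M)) = finrank (TruncPoly k n) M := by
  have := TruncPoly.nontrivial (k := k) hn
  have : FiniteDimensional k M := Module.Finite.trans (TruncPoly k n) M
  apply le_antisymm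
  · rw [LinearMap.finrank_ker_eq_finrank_quotient_range]
    exact (finrank_quotient_range_mulX_le (Module.Free.chooseBasis _ _)).trans_eq
      (finrank_eq_card_chooseBasisIndex _ _).symm
  · refine Nat.le_of_mul_le_mul_left ?_ (Nat.pos_of_ne_zero hn)
    rw [← TruncPoly.finrank_eq_mul_finrank M hn]
    exact LinearMap.finrank_le_mul_finrank_ker_of_pow_eq_zero _ (mulX_pow_eq_zero k n M)

theorem free_of_finrank_eq_mul_finrank_ker_mulX [Module.Finite (TruncPoly k n) M]
    (h : finrank k M = n * finrank k (LinearMap.ker (mulX k n M))) :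
    Module.Free (TruncPoly k n) M := by
  have : FiniteDimensional k M := Module.Finite.trans (TruncPoly k n) M
  set s := finrank k (LinearMap.ker (mulX k n M))
  obtain ⟨U, hU⟩ := (LinearMap.range (mulX k n M)).exists_isCompl
  have hUdim : finrank k U = s := by
    have := finrank_add_eq_of_isCompl hU
    have := LinearMap.finrank_range_add_finrank_ker (mulX k n M)
    omega
  let bU := Module.finBasisOfFinrankEq k U hUdim
  let v : Fin s → M := fun i ↦ bU i
  have hv : span k (Set.range v) = U := by
    rw [show Set.range v = U.subtype '' Set.range bU from Set.range_comp _ _,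
      span_image, bU.span_eq, Submodule.map_top, range_subtype]
  refine Module.Free.of_surjective_of_finrank_eq (K := k) (Fintype.linearCombination _ v) ?_ ?_
  · rw [← LinearMap.range_eq_top, Fintype.range_linearCombination]
    exact span_eq_top_of_span_sup_range_mulX_eq_top (hv ▸ sup_comm _ U ▸ hU.sup_eq_top)
  · rw [finrank_pi_fintype, Finset.sum_const, Finset.card_univ, Fintype.card_fin, smul_eq_mul,
      TruncPoly.finrank_eq, h, mul_comm]

end mulX

theorem free_submodule_iff_ker_smul_finrank_general (k : Type*) [Field k] (n : ℕ) (hn : 1 ≤ n)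
    (V : Type*) [AddCommGroup V] [Module (TruncPoly k n) V]
    [Module k V] [IsScalarTower k (TruncPoly k n) V]
    [Module.Finite (TruncPoly k n) V]
    (W : Submodule (TruncPoly k n) V) (s : ℕ)
    (hW : Module.finrank k W = n * s) :
    Module.Free (TruncPoly k n) W ↔
      Module.finrank k
        (LinearMap.ker ((LinearMap.lsmul (TruncPoly k n) W (truncX k n)).restrictScalars k)) = s := by
  have hn : n ≠ 0 := Nat.one_le_iff_ne_zero.mp hn
  constructor
  · intro _
    change finrank k (LinearMap.ker (mulX k n W)) = s
    rw [finrank_ker_mulX_of_free hn]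
    exact Nat.eq_of_mul_eq_mul_left (Nat.pos_of_ne_zero hn)
      ((TruncPoly.finrank_eq_mul_finrank W hn).symm.trans hW)
  · intro hs
    exact free_of_finrank_eq_mul_finrank_ker_mulX (hs ▸ hW)

/-- Let `R = k[X]/(X^n)` (`n ≥ 1`), `V` a finite free `R`-module and `W ⊆ V` an
`R`-submodule with `dim_k W = n·s`.  Then `W` is a free `R`-module if and only if the kernel of
multiplication by `x` on `W` has `k`-dimension exactly `s`. -/
theorem free_submodule_iff_ker_smul_finrank (k : Type*) [Field k] (n : ℕ) (hn : 1 ≤ n)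
    (V : Type*) [AddCommGroup V] [Module (TruncPoly k n) V]
    [Module k V] [IsScalarTower k (TruncPoly k n) V]
    [Module.Free (TruncPoly k n) V] [Module.Finite (TruncPoly k n) V]
    (W : Submodule (TruncPoly k n) V) (s : ℕ)
    (hW : Module.finrank k W = n * s) :
    Module.Free (TruncPoly k n) W ↔
      Module.finrank k
        (LinearMap.ker ((LinearMap.lsmul (TruncPoly k n) W (truncX k n)).restrictScalars k)) = s :=
  free_submodule_iff_ker_smul_finrank_general k n hn V W s hW
end

section
/- Let k be a finite field with q elements, n ≥ 1 an integer, and R = k[X]/(X^n). Then the number of R-submodules L of R × R such that L is isomorphic to R as an R-module and the quotient (R × R)/L is isomorphic to R as an R-module equals q^n + q^{n−1}. -/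
/-!
A submodule `L ≅ R` of `R × R` is spanned by `v = e⁻¹ 1`, and a lift `w` of a generator of the
free quotient makes `v, w` generate `R × R`, so `det (v, w)` is a unit; conversely a unit
determinant makes `det (v, ·)` a surjection with kernel `R ∙ v` (Cramer's rule). Over a local ring
this says that `v₁` or `v₂` is a unit, so the lines `L` are the points `[1 : b]` and `[a : 1]`,
`a ∈ 𝔪`, of the projective line. For `R = k[X]/(X^n)`, which is local with residue field `k`,
this gives `|R| + |𝔪| = q^n + q^(n-1)`.
-/

set_option synthInstance.maxHeartbeats 1000000

open Polynomial

open Submodule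

section Det

variable {A : Type*} [CommRing A]

def det₂ : (A × A) →ₗ[A] (A × A) →ₗ[A] A :=
  LinearMap.mk₂ A (fun v w => v.1 * w.2 - v.2 * w.1)
    (fun _ _ _ => by simp only [Prod.fst_add, Prod.snd_add]; ring)
    (fun _ _ _ => by simp only [Prod.smul_fst, Prod.smul_snd, smul_eq_mul]; ring)
    (fun _ _ _ => by simp only [Prod.fst_add, Prod.snd_add]; ring)
    (fun _ _ _ => by simp only [Prod.smul_fst, Prod.smul_snd, smul_eq_mul]; ring)

theorem det₂_apply (v w : A × A) : det₂ v w = v.1 * w.2 - v.2 * w.1 := rfl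

theorem det₂_self (v : A × A) : det₂ v v = 0 := by
  rw [det₂_apply, mul_comm, sub_self]

theorem det₂_smul_eq (v w m : A × A) : det₂ v w • m = det₂ m w • v + det₂ v m • w := by
  ext <;> simp only [det₂_apply, Prod.smul_fst, Prod.smul_snd, Prod.fst_add, Prod.snd_add,
    smul_eq_mul] <;> ring

theorem isUnit_det₂_of_forall_exists_smul_add_smul {v w : A × A}
    (h : ∀ m : A × A, ∃ a b : A, a • v + b • w = m) : IsUnit (det₂ v w) := by
  obtain ⟨a, b, hab⟩ := h (1, 0)
  obtain ⟨c, d, hcd⟩ := h (0, 1)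
  simp only [Prod.ext_iff, Prod.fst_add, Prod.snd_add, Prod.smul_fst, Prod.smul_snd,
    smul_eq_mul] at hab hcd
  refine IsUnit.of_mul_eq_one (a * d - b * c) ?_
  rw [det₂_apply]
  linear_combination (c * v.2 + d * w.2) * hab.1 + hcd.2 - (c * v.1 + d * w.1) * hab.2

variable {v w : A × A}

theorem ker_det₂_eq_span (hvw : IsUnit (det₂ v w)) : LinearMap.ker (det₂ v) = A ∙ v := by
  refine le_antisymm (fun m hm => ?_) (span_le.mpr (by simp [det₂_self]))
  rw [LinearMap.mem_ker] at hm
  have hcramer := det₂_smul_eq v w m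
  rw [hm, zero_smul, add_zero] at hcramer
  refine mem_span_singleton.mpr ⟨hvw.unit⁻¹ * det₂ m w, ?_⟩
  rw [mul_smul, ← hcramer, ← mul_smul, IsUnit.val_inv_mul, one_smul]

theorem det₂_surjective (hvw : IsUnit (det₂ v w)) : Function.Surjective (det₂ v) := fun t =>
  ⟨(t * hvw.unit⁻¹) • w, by rw [map_smul, smul_eq_mul, mul_assoc, IsUnit.val_inv_mul, mul_one]⟩

theorem toSpanSingleton_injective_of_isUnit_det₂ (hvw : IsUnit (det₂ v w)) :
    Function.Injective (LinearMap.toSpanSingleton A (A × A) v) := by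
  refine (injective_iff_map_eq_zero _).mpr fun c hc => ?_
  have : c * det₂ v w = 0 := by
    rw [← smul_eq_mul, ← LinearMap.smul_apply, ← map_smul, ← LinearMap.toSpanSingleton_apply, hc,
      map_zero, LinearMap.zero_apply]
  exact hvw.mul_left_eq_zero.mp this

theorem free_span_and_quotient_of_isUnit_det₂ (hvw : IsUnit (det₂ v w)) :
    Nonempty ((A ∙ v) ≃ₗ[A] A) ∧ Nonempty (((A × A) ⧸ (A ∙ v)) ≃ₗ[A] A) :=
  ⟨⟨(LinearEquiv.ofEq _ _ (LinearMap.span_singleton_eq_range A (A × A) v)).trans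
      (LinearEquiv.ofInjective _ (toSpanSingleton_injective_of_isUnit_det₂ hvw)).symm⟩,
    ⟨(quotEquivOfEq _ _ (ker_det₂_eq_span hvw).symm).trans
      ((det₂ v).quotKerEquivOfSurjective (det₂_surjective hvw))⟩⟩

theorem exists_isUnit_det₂_of_free (L : Submodule A (A × A)) (e : L ≃ₗ[A] A)
    (φ : ((A × A) ⧸ L) ≃ₗ[A] A) : ∃ v w : A × A, L = A ∙ v ∧ IsUnit (det₂ v w) := by
  set v : A × A := (e.symm 1).val with hv
  have hL : L = A ∙ v := by
    refine le_antisymm (fun l hl => mem_span_singleton.mpr ⟨e ⟨l, hl⟩, ?_⟩) ?_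
    · rw [hv, ← Submodule.coe_smul, ← map_smul, smul_eq_mul, mul_one, e.symm_apply_apply]
    · exact span_le.mpr (Set.singleton_subset_iff.mpr (e.symm 1).2)
  obtain ⟨w, hw⟩ := L.mkQ_surjective (φ.symm 1)
  refine ⟨v, w, hL, isUnit_det₂_of_forall_exists_smul_add_smul fun m => ?_⟩
  set ψ := φ.toLinearMap ∘ₗ L.mkQ
  have hψw : ψ w = 1 := by simp [ψ, hw]
  have : m - ψ m • w ∈ L := by
    rw [← Submodule.Quotient.mk_eq_zero, ← L.mkQ_apply, ← φ.map_eq_zero_iff]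
    change ψ (m - ψ m • w) = 0
    rw [map_sub, map_smul, hψw, smul_eq_mul, mul_one, sub_self]
  obtain ⟨a, ha⟩ := mem_span_singleton.mp (hL ▸ this)
  exact ⟨a, ψ m, by rw [ha, sub_add_cancel]⟩

theorem free_and_quotient_free_iff (L : Submodule A (A × A)) :
    (Nonempty (L ≃ₗ[A] A) ∧ Nonempty (((A × A) ⧸ L) ≃ₗ[A] A)) ↔
      ∃ v w : A × A, L = A ∙ v ∧ IsUnit (det₂ v w) := by
  constructor
  · rintro ⟨⟨e⟩, ⟨φ⟩⟩
    exact exists_isUnit_det₂_of_free L e φ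
  · rintro ⟨v, w, rfl, hvw⟩
    exact free_span_and_quotient_of_isUnit_det₂ hvw

theorem mk_mem_span_one_mk_iff {x y b : A} : (x, y) ∈ A ∙ ((1 : A), b) ↔ y = x * b := by
  simp [mem_span_singleton, Prod.ext_iff, eq_comm]

theorem mk_mem_span_mk_one_iff {x y a : A} : (x, y) ∈ A ∙ (a, (1 : A)) ↔ x = y * a := by
  simp [mem_span_singleton, Prod.ext_iff, eq_comm]

end Det

section LocalRing

open IsLocalRing

variable {A : Type*} [CommRing A] [IsLocalRing A]

theorem exists_isUnit_det₂_iff (v : A × A) :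
    (∃ w, IsUnit (det₂ v w)) ↔ IsUnit v.1 ∨ IsUnit v.2 := by
  constructor
  · rintro ⟨w, hw⟩
    rw [det₂_apply, sub_eq_add_neg] at hw
    rcases isUnit_or_isUnit_of_isUnit_add hw with h | h
    · exact .inl (isUnit_of_mul_isUnit_left h)
    · exact .inr (isUnit_of_mul_isUnit_left ((IsUnit.neg_iff _).mp h))
  · rintro (h | h)
    · exact ⟨(0, 1), by simpa [det₂_apply] using h⟩
    · exact ⟨(-1, 0), by simpa [det₂_apply] using h⟩

/-- The points `[1 : b]` and `[a : 1]`, `a ∈ 𝔪`, of the projective line over a local ring. -/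
def projectiveLineChart : A ⊕ maximalIdeal A → Submodule A (A × A)
  | .inl b => A ∙ (1, b)
  | .inr a => A ∙ ((a : A), 1)

theorem projectiveLineChart_injective : Function.Injective (projectiveLineChart (A := A)) := by
  have not_mem : ∀ (b : A) (a : maximalIdeal A), ((1 : A), b) ∉ A ∙ ((a : A), (1 : A)) := by
    intro b a h
    rw [mk_mem_span_mk_one_iff] at h
    exact a.2 (IsUnit.of_mul_eq_one_right b h.symm)
  rintro (b | a) (b' | a') h <;> simp only [projectiveLineChart] at h
  · have := h ▸ mem_span_singleton_self ((1 : A), b)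
    rw [mk_mem_span_one_mk_iff, one_mul] at this
    rw [this]
  · exact absurd (h ▸ mem_span_singleton_self _) (not_mem b a')
  · exact absurd (h ▸ mem_span_singleton_self _) (not_mem b' a)
  · have := h ▸ mem_span_singleton_self ((a : A), (1 : A))
    rw [mk_mem_span_mk_one_iff, one_mul] at this
    rw [Subtype.ext this]

theorem free_and_quotient_free_iff_of_isLocalRing (L : Submodule A (A × A)) :
    (Nonempty (L ≃ₗ[A] A) ∧ Nonempty (((A × A) ⧸ L) ≃ₗ[A] A)) ↔
      ∃ v : A × A, L = A ∙ v ∧ (IsUnit v.1 ∨ IsUnit v.2) := by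
  simp only [free_and_quotient_free_iff, ← exists_isUnit_det₂_iff, exists_and_left]

theorem exists_projectiveLineChart_eq_iff (L : Submodule A (A × A)) :
    (∃ z, projectiveLineChart z = L) ↔
      Nonempty (L ≃ₗ[A] A) ∧ Nonempty (((A × A) ⧸ L) ≃ₗ[A] A) := by
  rw [free_and_quotient_free_iff_of_isLocalRing]
  constructor
  · rintro ⟨b | a, rfl⟩
    · exact ⟨_, rfl, .inl isUnit_one⟩
    · exact ⟨_, rfl, .inr isUnit_one⟩
  · rintro ⟨v, rfl, hv⟩
    by_cases h1 : IsUnit v.1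
    · obtain ⟨u, hu⟩ := h1
      have hv : v = (u : A) • ((1 : A), ↑u⁻¹ * v.2) := by ext <;> simp [← hu]
      refine ⟨.inl (↑u⁻¹ * v.2), ?_⟩
      conv_rhs => rw [hv, span_singleton_smul_eq u.isUnit]
      rfl
    · obtain ⟨u, hu⟩ := hv.resolve_left h1
      have ha : ↑u⁻¹ * v.1 ∈ maximalIdeal A := fun h => h1 (by simpa using u.isUnit.mul h)
      have hv : v = (u : A) • (↑u⁻¹ * v.1, (1 : A)) := by ext <;> simp [← hu]
      refine ⟨.inr ⟨_, ha⟩, ?_⟩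
      conv_rhs => rw [hv, span_singleton_smul_eq u.isUnit]
      rfl

theorem natCard_free_submodules_with_free_quotient [Finite A] :
    Nat.card {L : Submodule A (A × A) //
        Nonempty (L ≃ₗ[A] A) ∧ Nonempty (((A × A) ⧸ L) ≃ₗ[A] A)} =
      Nat.card A + Nat.card (maximalIdeal A) := by
  rw [← Nat.card_sum]
  refine (Nat.card_congr (Equiv.ofBijective
    (fun z => ⟨projectiveLineChart z, (exists_projectiveLineChart_eq_iff _).mp ⟨z, rfl⟩⟩)
    ⟨fun z z' h => projectiveLineChart_injective (congrArg Subtype.val h), ?_⟩)).symm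
  rintro ⟨L, hL⟩
  obtain ⟨z, rfl⟩ := (exists_projectiveLineChart_eq_iff L).mpr hL
  exact ⟨z, rfl⟩

theorem natCard_eq_natCard_residueField_mul [Finite A] :
    Nat.card A = Nat.card (ResidueField A) * Nat.card (maximalIdeal A) := by
  rw [(maximalIdeal A).card_eq_card_quotient_mul_card, mul_comm]
  rfl

end LocalRing

theorem IsLocalRing.of_surjective_of_ker_le_nilradical {A K : Type*} [CommRing A] [Field K]
    (f : A →+* K) (hf : Function.Surjective f) (h : RingHom.ker f ≤ nilradical A) :
    IsLocalRing A := by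
  have := RingHom.ker_isMaximal_of_surjective f hf
  rw [le_antisymm h (nilradical_le_prime _)] at this
  exact IsLocalRing.of_isMaximal_nilradical A

namespace TruncPoly

open IsLocalRing

variable (k : Type*) [Field k] (n : ℕ)

instance : Module.Finite k (TruncPoly k n) := (monic_X_pow n).finite_quotient

theorem natCard_eq : Nat.card (TruncPoly k n) = Nat.card k ^ n := by
  rw [Module.natCard_eq_pow_finrank (K := k), finrank_quotient_span_eq_natDegree, natDegree_X_pow]

instance [Finite k] : Finite (TruncPoly k n) := Module.finite_of_finite k

variable [NeZero n]

noncomputable def constantCoeff : TruncPoly k n →+* k :=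
  Ideal.Quotient.lift _ Polynomial.constantCoeff fun _ hp => by
    rw [← RingHom.mem_ker, ker_constantCoeff]
    exact Ideal.span_singleton_le_span_singleton.mpr (dvd_pow_self X (NeZero.ne n)) hp

theorem constantCoeff_surjective : Function.Surjective (constantCoeff k n) :=
  Ideal.Quotient.lift_surjective_of_surjective _ _ fun c => ⟨C c, by simp⟩

theorem ker_constantCoeff_le_nilradical : RingHom.ker (constantCoeff k n) ≤ nilradical _ := by
  rintro a ha
  obtain ⟨p, rfl⟩ := Ideal.Quotient.mk_surjective a
  have hX : X ∣ p := by
    rw [← Ideal.mem_span_singleton, ← ker_constantCoeff]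
    exact ha
  refine mem_nilradical.mpr ⟨n, ?_⟩
  rw [← map_pow, Ideal.Quotient.eq_zero_iff_mem, Ideal.mem_span_singleton]
  exact pow_dvd_pow_of_dvd hX n

instance : IsLocalRing (TruncPoly k n) :=
  .of_surjective_of_ker_le_nilradical _ (constantCoeff_surjective k n)
    (ker_constantCoeff_le_nilradical k n)

theorem natCard_residueField : Nat.card (ResidueField (TruncPoly k n)) = Nat.card k := by
  have hker : RingHom.ker (constantCoeff k n) = maximalIdeal _ :=
    eq_maximalIdeal (RingHom.ker_isMaximal_of_surjective _ (constantCoeff_surjective k n))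
  exact Nat.card_congr ((Ideal.quotEquivOfEq hker.symm).trans
    (RingHom.quotientKerEquivOfSurjective (constantCoeff_surjective k n))).toEquiv

theorem natCard_maximalIdeal [Finite k] :
    Nat.card (maximalIdeal (TruncPoly k n)) = Nat.card k ^ (n - 1) := by
  have h := natCard_eq_natCard_residueField_mul (A := TruncPoly k n)
  rw [natCard_eq, natCard_residueField] at h
  obtain ⟨m, rfl⟩ := Nat.exists_eq_succ_of_ne_zero (NeZero.ne n)
  rw [pow_succ'] at h
  exact (Nat.eq_of_mul_eq_mul_left Nat.card_pos h).symm

end TruncPoly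

/-- Over `R = k[X]/(X^n)` with `k` a finite field with `q` elements (`n ≥ 1`),
the number of `R`-submodules `L ⊆ R × R` with `L ≅ R` and `(R × R)/L ≅ R` equals
`q^n + q^{n−1}`. -/
theorem card_free_rank_one_submodules_with_free_quotient
    (k : Type*) [Field k] [Fintype k] (q : ℕ) (hq : Fintype.card k = q)
    (n : ℕ) (hn : 1 ≤ n) :
    Nat.card {L : Submodule (TruncPoly k n) (TruncPoly k n × TruncPoly k n) //
        Nonempty (L ≃ₗ[TruncPoly k n] TruncPoly k n) ∧
        Nonempty (((TruncPoly k n × TruncPoly k n) ⧸ L) ≃ₗ[TruncPoly k n] TruncPoly k n)} =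
      q ^ n + q ^ (n - 1) := by
  have : NeZero n := ⟨by omega⟩
  rw [natCard_free_submodules_with_free_quotient, TruncPoly.natCard_eq,
    TruncPoly.natCard_maximalIdeal, Nat.card_eq_fintype_card, hq]
end

section
/- Let k be a field, n ≥ 1 an integer, and R = k[X]/(X^n). Let V and V' be finite free R-modules of ranks v and v' respectively, let W ⊆ V be a free R-submodule of rank w such that V/W is a free R-module, and let W' ⊆ V' be a free R-submodule of rank w' such that V'/W' is a free R-module. Then the k-vector space { f : V → V' R-linear | f(W) ⊆ W' } has k-dimension n·(w·w' + (v − w)·v'). -/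
set_option synthInstance.maxHeartbeats 1000000
set_option maxHeartbeats 2000000

open Polynomial

/-!
Since `V ⧸ W` is projective, `W` has a complement `C ≃ V ⧸ W` in `V`, and a map `f : V → V'` with
`f(W) ⊆ W'` is the same thing as a pair of arbitrary maps `W → W'` and `C → V'`. Between free
`R`-modules of ranks `a` and `b` the maps form a free `R`-module of rank `a * b`, and `R` has
`k`-dimension `n`.
-/

open Module

namespace Submodule

variable {R M N : Type*} [CommRing R] [AddCommGroup M] [Module R M] [AddCommGroup N] [Module R N]

theorem exists_isCompl_of_projective_quotient (p : Submodule R M) [Projective R (M ⧸ p)] :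
    ∃ q : Submodule R M, IsCompl p q := by
  obtain ⟨s, hs⟩ := projective_lifting_property p.mkQ LinearMap.id p.mkQ_surjective
  have hidem : IsIdempotentElem (s ∘ₗ p.mkQ) := by
    rw [IsIdempotentElem, Module.End.mul_eq_comp, LinearMap.comp_assoc,
      ← LinearMap.comp_assoc p.mkQ, hs, LinearMap.id_comp]
  have hker : LinearMap.ker (s ∘ₗ p.mkQ) = p := by
    rw [LinearMap.ker_comp_of_ker_eq_bot _ (LinearMap.ker_eq_bot_of_inverse hs), ker_mkQ]
  exact ⟨_, hker ▸ (LinearMap.IsIdempotentElem.isCompl hidem).symm⟩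

variable {p c : Submodule R M} (h : IsCompl p c) (q : Submodule R N)

noncomputable def compatibleMapsEquivProdOfIsCompl :
    compatibleMaps p q ≃ₗ[R] (p →ₗ[R] q) × (c →ₗ[R] N) where
  toFun f := (f.1.restrict fun _ hx => f.2 hx, f.1.domRestrict c)
  map_add' _ _ := rfl
  map_smul' _ _ := rfl
  invFun g := ⟨LinearMap.ofIsCompl h (q.subtype ∘ₗ g.1) g.2, fun x hx => by
    simp [LinearMap.ofIsCompl_apply_left h ⟨x, hx⟩]⟩
  left_inv f := Subtype.ext <| LinearMap.ofIsCompl_eq h (fun _ => rfl) (fun _ => rfl)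
  right_inv g :=
    Prod.ext (LinearMap.ext fun _ => Subtype.ext (by simp)) (LinearMap.ext fun _ => by simp)

end Submodule

theorem Module.finrank_linearMap_eq_finrank_mul (k : Type*) {R M N : Type*} [Field k] [CommRing R]
    [Nontrivial R] [Algebra k R]
    [AddCommGroup M] [Module R M] [Module.Free R M] [Module.Finite R M]
    [AddCommGroup N] [Module R N] [Module k N] [IsScalarTower k R N] [Module.Free R N] :
    finrank k (M →ₗ[R] N) = finrank k R * (finrank R M * finrank R N) := by
  rw [finrank_linearMap, ← finrank_mul_finrank k R N]
  ring

theorem Submodule.finrank_compatibleMaps_of_isCompl (k : Type*) {R M N : Type*} [Field k]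
    [CommRing R] [Nontrivial R] [Algebra k R] [Module.Finite k R] [AddCommGroup M] [Module R M]
    [AddCommGroup N] [Module R N] [Module k N] [IsScalarTower k R N]
    [Module.Free R N] [Module.Finite R N]
    {p c : Submodule R M} (h : IsCompl p c) (q : Submodule R N)
    [Module.Free R p] [Module.Finite R p] [Module.Free R c] [Module.Finite R c]
    [Module.Free R q] [Module.Finite R q] :
    finrank k (compatibleMaps p q) =
      finrank k R * (finrank R p * finrank R q + finrank R c * finrank R N) := by
  have : Module.Finite k (p →ₗ[R] q) := .trans R _
  have : Module.Finite k (c →ₗ[R] N) := .trans R _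
  rw [((compatibleMapsEquivProdOfIsCompl h q).restrictScalars k).finrank_eq, finrank_prod,
    finrank_linearMap_eq_finrank_mul k, finrank_linearMap_eq_finrank_mul k, Nat.mul_add]

theorem finrank_compatibleMaps_general (k : Type*) [Field k] (n : ℕ) (hn : 1 ≤ n)
    (V V' : Type*) [AddCommGroup V] [Module (TruncPoly k n) V]
    [AddCommGroup V'] [Module (TruncPoly k n) V']
    [Module k V'] [IsScalarTower k (TruncPoly k n) V']
    [Module.Finite (TruncPoly k n) V]
    [Module.Free (TruncPoly k n) V'] [Module.Finite (TruncPoly k n) V']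
    (v v' w w' : ℕ)
    (hv : Module.finrank (TruncPoly k n) V = v)
    (hv' : Module.finrank (TruncPoly k n) V' = v')
    (W : Submodule (TruncPoly k n) V) (W' : Submodule (TruncPoly k n) V')
    [Module.Free (TruncPoly k n) W] [Module.Free (TruncPoly k n) W']
    (hw : Module.finrank (TruncPoly k n) W = w)
    (hw' : Module.finrank (TruncPoly k n) W' = w')
    [Module.Free (TruncPoly k n) (V ⧸ W)] :
    Module.finrank k (Submodule.compatibleMaps W W') = n * (w * w' + (v - w) * v') := by
  have hR : finrank k (TruncPoly k n) = n := by simp [finrank_quotient_span_eq_natDegree]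
  have : Module.Finite k (TruncPoly k n) := Module.finite_of_finrank_pos (by omega)
  have : Nontrivial (TruncPoly k n) := Module.nontrivial_of_finrank_pos (R := k) (by omega)
  obtain ⟨C, hWC⟩ := W.exists_isCompl_of_projective_quotient
  have : Module.Free (TruncPoly k n) C := .of_equiv (W.quotientEquivOfIsCompl C hWC)
  have hC : finrank (TruncPoly k n) C = v - w := by
    have := (W.prodEquivOfIsCompl C hWC).finrank_eq
    rw [finrank_prod] at this
    omega
  rw [W.finrank_compatibleMaps_of_isCompl k hWC W', hR, hC, hw, hw', hv']

/-- Over `R = k[X]/(X^n)` (`n ≥ 1`), let `V, V'` be finite free `R`-modules of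
ranks `v, v'`, let `W ⊆ V` be a free `R`-submodule of rank `w` with `V/W` free, and `W' ⊆ V'`
a free `R`-submodule of rank `w'` with `V'/W'` free.  Then the `k`-vector space
`{f : V →ₗ[R] V' | f(W) ⊆ W'}` has `k`-dimension `n·(w·w' + (v − w)·v')`. -/
theorem finrank_compatibleMaps (k : Type*) [Field k] (n : ℕ) (hn : 1 ≤ n)
    (V V' : Type*) [AddCommGroup V] [Module (TruncPoly k n) V]
    [Module k V] [IsScalarTower k (TruncPoly k n) V]
    [AddCommGroup V'] [Module (TruncPoly k n) V']
    [Module k V'] [IsScalarTower k (TruncPoly k n) V']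
    [Module.Free (TruncPoly k n) V] [Module.Finite (TruncPoly k n) V]
    [Module.Free (TruncPoly k n) V'] [Module.Finite (TruncPoly k n) V']
    (v v' w w' : ℕ)
    (hv : Module.finrank (TruncPoly k n) V = v)
    (hv' : Module.finrank (TruncPoly k n) V' = v')
    (W : Submodule (TruncPoly k n) V) (W' : Submodule (TruncPoly k n) V')
    [Module.Free (TruncPoly k n) W] [Module.Free (TruncPoly k n) W']
    (hw : Module.finrank (TruncPoly k n) W = w)
    (hw' : Module.finrank (TruncPoly k n) W' = w')
    [Module.Free (TruncPoly k n) (V ⧸ W)] [Module.Free (TruncPoly k n) (V' ⧸ W')] :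
    Module.finrank k (Submodule.compatibleMaps W W') = n * (w * w' + (v - w) * v') :=
  finrank_compatibleMaps_general k n hn V V' v v' w w' hv hv' W W' hw hw'
end
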